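/- The Gamma function satisfies Γ(x+a) ~ √(2πx) · x^{x+a−1} e^{−x} as x → ∞, for any fixed a ≥ 0 (i.e., the ratio tends to 1). -/

import Mathlib

/-!
Write `y = n + s` with `n = ⌊y⌋₊` and `0 ≤ s < 1`. Log-convexity of `Γ` squeezes `Γ (n + s)`
between `n / (n + 1) · Γ n · n ^ s` and `Γ n · n ^ s`, and Stirling's formula for `n!` turns
`Γ n · n ^ s` into `√(2πy) y ^ (y - 1) e ^ (-y)` up to a factor `exp (O (1 / y))`. This gives
Stirling's formula `Γ y ~ √(2πy) y ^ (y - 1) e ^ (-y)` along the reals; the shift `y = x + a`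
then only costs the factor `(1 + a / x) ^ (x + a - 1 / 2) e ^ (-a) → 1`.
-/

open Filter Real Topology
open scoped Nat

namespace Real

theorem Gamma_add_le_Gamma_mul_rpow {x s : ℝ} (hx : 0 < x) (hs₀ : 0 ≤ s) (hs₁ : s ≤ 1) :
    Gamma (x + s) ≤ Gamma x * x ^ s := by
  have hΓ : 0 < Gamma x := Gamma_pos_of_pos hx
  have hconv := convexOn_log_Gamma.2 (Set.mem_Ioi.2 hx) (Set.mem_Ioi.2 (by linarith : 0 < x + 1))
    (by linarith : 0 ≤ 1 - s) hs₀ (by ring)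
  simp only [smul_eq_mul, Function.comp_apply, Gamma_add_one hx.ne', log_mul hx.ne' hΓ.ne',
    show (1 - s) * x + s * (x + 1) = x + s by ring] at hconv
  calc Gamma (x + s) = exp (log (Gamma (x + s))) :=
        (exp_log (Gamma_pos_of_pos (by linarith))).symm
    _ ≤ exp (log (Gamma x) + s * log x) := exp_le_exp.2 (by linarith)
    _ = Gamma x * x ^ s := by rw [exp_add, exp_log hΓ, rpow_def_of_pos hx, mul_comm s]

theorem Gamma_mul_rpow_le_Gamma_add {x s : ℝ} (hx : 0 < x) (hs₀ : 0 ≤ s) (hs₁ : s ≤ 1) :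
    x / (x + 1) * (Gamma x * x ^ s) ≤ Gamma (x + s) := by
  have h := Gamma_add_le_Gamma_mul_rpow (x := x + s) (s := 1 - s) (by linarith) (by linarith)
    (by linarith)
  rw [show x + s + (1 - s) = x + 1 by ring, Gamma_add_one hx.ne'] at h
  have hpow : (x + s) ^ (1 - s) * x ^ s ≤ x + 1 := calc
    _ ≤ (x + s) ^ (1 - s) * (x + s) ^ s := by gcongr; linarith
    _ = x + s := by rw [← rpow_add (by linarith), sub_add_cancel, rpow_one]
    _ ≤ x + 1 := by linarith
  rw [div_mul_eq_mul_div, div_le_iff₀ (by linarith)]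
  calc x * (Gamma x * x ^ s) = x * Gamma x * x ^ s := by ring
    _ ≤ Gamma (x + s) * (x + s) ^ (1 - s) * x ^ s := by gcongr
    _ ≤ Gamma (x + s) * (x + 1) := by
        rw [mul_assoc]; exact mul_le_mul_of_nonneg_left hpow (Gamma_pos_of_pos (by linarith)).le

noncomputable def stirlingTerm (p e : ℝ) : ℝ := √(2 * π * p) * p ^ e * exp (-p)

lemma stirlingTerm_pos {p : ℝ} (hp : 0 < p) (e : ℝ) : 0 < stirlingTerm p e := by
  unfold stirlingTerm; positivity

lemma stirlingTerm_div_stirlingTerm {p q : ℝ} (hp : 0 < p) (hq : 0 < q) (e : ℝ) :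
    stirlingTerm p e / stirlingTerm q e = (p / q) ^ (e + 1 / 2) * exp (q - p) := by
  rw [rpow_add (div_pos hp hq), div_rpow hp.le hq.le, div_rpow hp.le hq.le, ← sqrt_eq_rpow,
    ← sqrt_eq_rpow, stirlingTerm, stirlingTerm, sqrt_mul' _ hp.le, sqrt_mul' _ hq.le,
    exp_sub, exp_neg, exp_neg]
  have := sqrt_pos.2 hp
  have := sqrt_pos.2 hq
  have : 0 < √(2 * π) := by positivity
  have := rpow_pos_of_pos hq e
  field_simp

lemma Gamma_natCast_mul_rpow_eq_stirlingSeq_mul {n : ℕ} (hn : n ≠ 0) (y : ℝ) :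
    Gamma n * (n : ℝ) ^ (y - n) = Stirling.stirlingSeq n / √π * stirlingTerm n (y - 1) := by
  have hn' : (0 : ℝ) < n := by positivity
  have hfact : (n ! : ℝ) = n * Gamma n := by
    rw [← Gamma_add_one hn'.ne', Gamma_nat_eq_factorial]
  have hpow : (n : ℝ) ^ (y - 1) = n ^ (y - n) * n ^ n / n := by
    rw [← rpow_natCast, ← rpow_add hn', ← rpow_sub_one hn'.ne']; ring_nf
  rw [Stirling.stirlingSeq, stirlingTerm, hfact, hpow, div_pow, ← exp_nat_mul, mul_one,
    sqrt_mul' _ hn'.le, sqrt_mul' _ hn'.le, sqrt_mul' _ pi_pos.le, exp_neg]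
  have := sqrt_pos.2 hn'
  have := sqrt_pos.2 pi_pos
  field_simp

lemma abs_log_floor_div_mul_add_sub_floor_le {y : ℝ} (hy : 1 ≤ y) :
    |log (⌊y⌋₊ / y) * (y - 1 / 2) + (y - ⌊y⌋₊)| ≤ 1 / y := by
  have hfloor : 1 ≤ ⌊y⌋₊ := Nat.le_floor (by simpa using hy)
  set n : ℝ := (⌊y⌋₊ : ℝ)
  have hn₁ : 1 ≤ n := by simp only [n]; exact_mod_cast hfloor
  have hny : n ≤ y := Nat.floor_le (by linarith)
  have hyn : y < n + 1 := Nat.lt_floor_add_one y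
  have hy₀ : 0 < y := by linarith
  have hn₀ : 0 < n := by linarith
  have hlog_le : log (n / y) ≤ n / y - 1 := log_le_sub_one_of_pos (by positivity)
  have hle_log : 1 - y / n ≤ log (n / y) := by
    simpa using one_sub_inv_le_log_of_pos (div_pos hn₀ hy₀)
  have hupper : (n / y - 1) * (y - 1 / 2) + (y - n) ≤ 1 / y := by
    rw [show (n / y - 1) * (y - 1 / 2) + (y - n) = (y - n) / (2 * y) by field_simp; ring,
      div_le_div_iff₀ (by positivity) hy₀]
    nlinarith
  have hlower : -(1 / y) ≤ (1 - y / n) * (y - 1 / 2) + (y - n) := by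
    rw [← sub_nonneg, show (1 - y / n) * (y - 1 / 2) + (y - n) - -(1 / y) =
      ((y - n) * (n - y + 1 / 2) * y + n) / (n * y) by field_simp; ring]
    apply div_nonneg _ (by positivity)
    nlinarith [mul_nonneg (mul_nonneg hy₀.le (by linarith : 0 ≤ 1 - (y - n)))
      (by linarith : 0 ≤ y - n + 1 / 2)]
  rw [abs_le]
  constructor <;> nlinarith

lemma tendsto_stirlingTerm_floor_div_stirlingTerm :
    Tendsto (fun y : ℝ => stirlingTerm ⌊y⌋₊ (y - 1) / stirlingTerm y (y - 1)) atTop (𝓝 1) := by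
  let E : ℝ → ℝ := fun y => log (⌊y⌋₊ / y) * (y - 1 / 2) + (y - ⌊y⌋₊)
  have hE : Tendsto E atTop (𝓝 0) := by
    refine squeeze_zero_norm' ?_ ((tendsto_const_nhds (x := (1 : ℝ))).div_atTop tendsto_id)
    filter_upwards [eventually_ge_atTop 1] with y hy
    exact abs_log_floor_div_mul_add_sub_floor_le hy
  have hexpE := (continuous_exp.tendsto 0).comp hE
  rw [exp_zero] at hexpE
  refine hexpE.congr' ?_
  filter_upwards [eventually_ge_atTop 1] with y hy
  have hn : (0 : ℝ) < ⌊y⌋₊ := by exact_mod_cast Nat.floor_pos.2 hy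
  rw [Function.comp_apply, stirlingTerm_div_stirlingTerm hn (by linarith),
    rpow_def_of_pos (div_pos hn (by linarith)), ← exp_add]
  simp only [E]
  ring_nf

theorem tendsto_Gamma_div_stirlingTerm :
    Tendsto (fun y => Gamma y / stirlingTerm y (y - 1)) atTop (𝓝 1) := by
  have hfloor : Tendsto (fun y : ℝ => ⌊y⌋₊) atTop atTop := tendsto_nat_floor_atTop
  have hseq : Tendsto (fun y : ℝ => Stirling.stirlingSeq ⌊y⌋₊ / √π) atTop (𝓝 1) := by
    simpa [(sqrt_pos.2 pi_pos).ne'] using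
      (Stirling.tendsto_stirlingSeq_sqrt_pi.comp hfloor).div_const √π
  have hupper := hseq.mul tendsto_stirlingTerm_floor_div_stirlingTerm
  rw [mul_one] at hupper
  have hlower := ((tendsto_natCast_div_add_atTop (1 : ℝ)).comp hfloor).mul hupper
  rw [mul_one] at hlower
  refine tendsto_of_tendsto_of_tendsto_of_le_of_le' hlower hupper ?_ ?_ <;>
    filter_upwards [eventually_ge_atTop 1] with y hy
  all_goals
    have hn : (0 : ℝ) < ⌊y⌋₊ := by exact_mod_cast Nat.floor_pos.2 hy
    have hs₀ : 0 ≤ y - ⌊y⌋₊ := sub_nonneg.2 (Nat.floor_le (by linarith))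
    have hs₁ : y - ⌊y⌋₊ ≤ 1 := by linarith [Nat.lt_floor_add_one y]
    have hT := stirlingTerm_pos (by linarith : (0 : ℝ) < y) (y - 1)
    simp only [Function.comp_apply, ← mul_div_assoc,
      ← Gamma_natCast_mul_rpow_eq_stirlingSeq_mul (Nat.floor_pos.2 hy).ne']
    gcongr
  · simpa using Gamma_mul_rpow_le_Gamma_add hn hs₀ hs₁
  · simpa using Gamma_add_le_Gamma_mul_rpow hn hs₀ hs₁

lemma tendsto_one_add_div_rpow_add_exp (a b : ℝ) :
    Tendsto (fun x : ℝ => (1 + a / x) ^ (x + b)) atTop (𝓝 (exp a)) := by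
  have hbase : Tendsto (fun x : ℝ => 1 + a / x) atTop (𝓝 1) := by
    simpa using tendsto_const_nhds.add ((tendsto_const_nhds (x := a)).div_atTop tendsto_id)
  have hb := hbase.rpow_const (p := b) (Or.inl one_ne_zero)
  rw [one_rpow] at hb
  have h := (tendsto_one_add_div_rpow_exp a).mul hb
  rw [mul_one] at h
  refine h.congr' ?_
  filter_upwards [hbase.eventually (lt_mem_nhds one_pos)] with x hx
  rw [rpow_add hx]

lemma tendsto_stirlingTerm_add_div_stirlingTerm (a : ℝ) :
    Tendsto (fun x => stirlingTerm (x + a) (x + a - 1) / stirlingTerm x (x + a - 1)) atTop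
      (𝓝 1) := by
  have h := (tendsto_one_add_div_rpow_add_exp a (a - 1 / 2)).mul_const (exp (-a))
  rw [← exp_add, add_neg_cancel, exp_zero] at h
  refine h.congr' ?_
  filter_upwards [eventually_gt_atTop 0, eventually_gt_atTop (-a)] with x hx hxa
  rw [stirlingTerm_div_stirlingTerm (by linarith) hx, add_div, div_self hx.ne',
    show x + a - 1 + 1 / 2 = x + (a - 1 / 2) by ring, show x - (x + a) = -a by ring]

end Real

theorem gamma_stirling_asymptotic (a : ℝ) :
    Tendsto (fun x : ℝ =>
      Real.Gamma (x + a) / (Real.sqrt (2 * π * x) * x ^ (x + a - 1) * Real.exp (-x)))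
      atTop (nhds 1) := by
  have hΓ := tendsto_Gamma_div_stirlingTerm.comp (tendsto_atTop_add_const_right atTop a tendsto_id)
  have h := hΓ.mul (tendsto_stirlingTerm_add_div_stirlingTerm a)
  rw [mul_one] at h
  refine h.congr' ?_
  filter_upwards [eventually_gt_atTop (-a)] with x hxa
  have := stirlingTerm_pos (by linarith : 0 < x + a) (x + a - 1)
  simp only [Function.comp_apply, id, div_mul_div_cancel₀ this.ne']
  rfl
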